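/- Let G = (V,E,e) be a finite connected simple rooted graph and let k ≥ 1 be such that the set V_e^{[k]} of vertices of G at graph distance exactly k from e is nonempty; set σ = |V_e^{[k]}|. For N ≥ 1 let G^{[⋆N,k]} denote the distance k-graph of the N-fold star power G^{⋆N} = G ⋆ ⋯ ⋆ G, and let A^{[⋆N,k]} be its adjacency matrix. Then the vacuum spectral distribution of A^{[⋆N,k]}/√(Nσ) (i.e., the probability measure μ_N on ℝ whose m-th moment equals the (e,e)-entry of (A^{[⋆N,k]}/√(Nσ))^m for every m ≥ 0) converges weakly, as N → ∞, to the centered Bernoulli distribution (1/2)δ_{-1} + (1/2)δ_{1}. -/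

import Mathlib

open MeasureTheory Filter
open scoped ENNReal Topology

noncomputable section

/-- The distance `k`-graph of a graph: same vertices, edges between vertices at distance `k`. -/
def distGraph {W : Type*} (H : SimpleGraph W) (k : ℕ) : SimpleGraph W where
  Adj x y := x ≠ y ∧ H.dist x y = k
  symm := ⟨fun x y h => ⟨h.1.symm, by rw [SimpleGraph.dist_comm]; exact h.2⟩⟩
  loopless := ⟨fun x h => h.1 rfl⟩

/-- Vertex set of the `N`-fold star power of a graph rooted at `e`:
the common root `none`, plus `N` copies of the non-root vertices. -/
abbrev StarVert (V : Type*) (e : V) (N : ℕ) := Option (Fin N × {v : V // v ≠ e})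

def starAdj {V : Type*} (G : SimpleGraph V) (e : V) (N : ℕ) :
    StarVert V e N → StarVert V e N → Prop
  | none, none => False
  | none, some q => G.Adj e q.2.1
  | some p, none => G.Adj p.2.1 e
  | some p, some q => p.1 = q.1 ∧ G.Adj p.2.1 q.2.1

/-- The `N`-fold star power of a rooted graph `(G, e)`: `N` copies of `G` glued at `e`. -/
def starPower {V : Type*} (G : SimpleGraph V) (e : V) (N : ℕ) :
    SimpleGraph (StarVert V e N) where
  Adj := starAdj G e N
  symm := by
    constructor
    rintro (_ | p) (_ | q) h
    · exact h.elim
    · exact h.symm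
    · exact h.symm
    · exact ⟨h.1.symm, h.2.symm⟩
  loopless := by
    constructor
    rintro (_ | p) h
    · exact h.elim
    · exact G.irrefl h.2

/-- The vertex of the `i`-th copy of `G` in the `N`-fold star power corresponding to `v ∈ G`. -/
def rootedEmbed {V : Type*} [DecidableEq V] (e : V) (N : ℕ) (i : Fin N) (v : V) :
    StarVert V e N :=
  if h : v = e then none else some (i, ⟨v, h⟩)

open scoped Classical in
/-- The real adjacency matrix of a graph. -/
def adjMat {W : Type*} [Fintype W] (H : SimpleGraph W) : Matrix W W ℝ :=
  fun x y => if H.Adj x y then 1 else 0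

/-- The centered Bernoulli distribution `(1/2)δ_{-1} + (1/2)δ_1`. -/
def bern : Measure ℝ := (1/2 : ℝ≥0∞) • Measure.dirac (-1) + (1/2 : ℝ≥0∞) • Measure.dirac 1

/-- The Cauchy transform of a measure on `ℝ`. -/
def cauchyT (μ : Measure ℝ) (z : ℂ) : ℂ := ∫ x, (z - (x : ℂ))⁻¹ ∂μ

/-- The distance `d(μ₁,μ₂) = sup_{Im z ≥ 1} |G_{μ₁}(z) - G_{μ₂}(z)|`. -/
def cdist (μ₁ μ₂ : Measure ℝ) : ℝ :=
  ⨆ z : {z : ℂ // 1 ≤ z.im}, ‖cauchyT μ₁ z - cauchyT μ₂ z‖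

/-!
Write `A` for the adjacency matrix of the distance-`k` graph of `G^{⋆N}`. The distance-`k`
neighbours of the root are the `N` copies of the `σ` vertices at distance `k` from `e`, so
`(A²)_{ee} = Nσ`. A walk between two different copies passes through the root, so a common
distance-`k` neighbour of the root and of a vertex `y ≠ e` lies in the copy of `y`; hence
`(A²)_{ey} ≤ |V|` and `(A⁴)_{ee} = ∑_y (A²)_{ey}² ≤ (Nσ)² + N|V|³`. After normalization the measures
`μ_N` have mean `0`, variance `1` and `∫ (x² - 1)² dμ_N = m₄ - 1 = O(1/N)`: they concentrate on
`{-1, 1}` with mean `0`. A bounded continuous `f` differs from its affine interpolant at `±1` by at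
most `ε + C (x² - 1)²`, which gives `∫ f dμ_N → (f(-1) + f(1))/2`.
-/

open SimpleGraph

theorem SimpleGraph.Reachable.dist_map_le {V W : Type*} {G : SimpleGraph V} {H : SimpleGraph W}
    {a b : V} (h : G.Reachable a b) (φ : G →g H) : H.dist (φ a) (φ b) ≤ G.dist a b := by
  obtain ⟨p, hp⟩ := h.exists_walk_length_eq_dist
  simpa [hp] using H.dist_le (p.map φ)

theorem SimpleGraph.dist_map_eq_of_leftInverse {V W : Type*} {G : SimpleGraph V}
    {H : SimpleGraph W} (φ : G →g H) (π : H →g G) (hπ : ∀ x, π (φ x) = x) (a b : V) :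
    H.dist (φ a) (φ b) = G.dist a b := by
  by_cases hG : G.Reachable a b
  · refine le_antisymm (hG.dist_map_le φ) ?_
    simpa only [hπ] using (hG.map φ).dist_map_le π
  · have hH : ¬H.Reachable (φ a) (φ b) := fun h => hG (by simpa only [hπ] using h.map π)
    rw [dist_eq_zero_of_not_reachable hG, dist_eq_zero_of_not_reachable hH]

section StarPower

variable {V : Type*} {G : SimpleGraph V} {e : V} {N k : ℕ}

def starPowerProj (G : SimpleGraph V) (e : V) (N : ℕ) : starPower G e N →g G where
  toFun x := x.elim e fun p => p.2.1
  map_rel' := by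
    rintro (_ | p) (_ | q) h
    exacts [h.elim, h, h, h.2]

theorem starPower_walk_map_fst_eq {x y : StarVert V e N} (p : (starPower G e N).Walk x y)
    (hp : none ∉ p.support) : x.map Prod.fst = y.map Prod.fst := by
  induction p with
  | nil => rfl
  | @cons x z y h q ih =>
    rw [Walk.support_cons, List.mem_cons, not_or] at hp
    rcases x with _ | ⟨i, v⟩
    · exact absurd rfl hp.1
    rcases z with _ | ⟨j, w⟩
    · exact absurd q.start_mem_support hp.2
    rw [← ih hp.2]
    exact congrArg some h.1

-- Every walk between different copies passes through the root.
theorem starPower_dist_none_add_dist_none_le {i j : Fin N} (hij : i ≠ j)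
    {v w : {v : V // v ≠ e}} (h : (starPower G e N).Reachable (some (i, v)) (some (j, w))) :
    (starPower G e N).dist (some (i, v)) none + (starPower G e N).dist none (some (j, w)) ≤
      (starPower G e N).dist (some (i, v)) (some (j, w)) := by
  classical
  obtain ⟨p, hp⟩ := h.exists_walk_length_eq_dist
  have hnone : none ∈ p.support := by
    by_contra hn
    exact hij (Option.some_injective _ (starPower_walk_map_fst_eq p hn))
  rw [← hp, ← p.take_spec hnone, Walk.length_append]
  exact add_le_add (dist_le _) (dist_le _)

theorem distGraph_starPower_adj_mem_copy (hk : k ≠ 0) {x : StarVert V e N} {j : Fin N}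
    {w : {v : V // v ≠ e}} (hx : (distGraph (starPower G e N) k).Adj none x)
    (hxw : (distGraph (starPower G e N) k).Adj x (some (j, w))) :
    ∃ v, x = some (j, v) := by
  rcases x with _ | ⟨i, v⟩
  · exact absurd rfl hx.1
  obtain rfl | hij := eq_or_ne i j
  · exact ⟨v, rfl⟩
  have hreach := Reachable.of_dist_ne_zero (hxw.2 ▸ hk)
  have hpos := ((Reachable.of_dist_ne_zero (hx.2 ▸ hk)).trans hreach).pos_dist_of_ne
    (Option.some_ne_none _).symm
  have := starPower_dist_none_add_dist_none_le hij hreach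
  rw [dist_comm, hx.2, hxw.2] at this
  omega

theorem card_common_neighbors_distGraph_starPower_le [Finite V] (hk : k ≠ 0) (j : Fin N)
    (w : {v : V // v ≠ e}) :
    Nat.card {x // (distGraph (starPower G e N) k).Adj none x ∧
        (distGraph (starPower G e N) k).Adj x (some (j, w))} ≤ Nat.card {v : V // v ≠ e} := by
  refine Nat.card_le_card_of_injective (fun x => x.1.elim w Prod.snd) ?_
  rintro ⟨x, hx⟩ ⟨y, hy⟩ hxy
  obtain ⟨v, rfl⟩ := distGraph_starPower_adj_mem_copy hk hx.1 hx.2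
  obtain ⟨u, rfl⟩ := distGraph_starPower_adj_mem_copy hk hy.1 hy.2
  cases hxy
  rfl

variable [DecidableEq V]

def starPowerCopy (G : SimpleGraph V) (e : V) (N : ℕ) (i : Fin N) : G →g starPower G e N where
  toFun := rootedEmbed e N i
  map_rel' := by
    intro a b hab
    unfold rootedEmbed
    split_ifs with ha hb hb
    · exact absurd (ha ▸ hb ▸ hab) G.irrefl
    · exact ha ▸ hab
    · exact hb ▸ hab
    · exact ⟨rfl, hab⟩

theorem starPower_dist_none_some (i : Fin N) (v : {v : V // v ≠ e}) :
    (starPower G e N).dist none (some (i, v)) = G.dist e v := by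
  have he : starPowerCopy G e N i e = none := dif_pos rfl
  have hv : starPowerCopy G e N i v = some (i, v) := dif_neg v.2
  rw [← he, ← hv]
  exact dist_map_eq_of_leftInverse _ (starPowerProj G e N)
    (fun x => by by_cases hx : x = e <;> simp [starPowerCopy, rootedEmbed, starPowerProj, hx]) _ _

theorem distGraph_starPower_adj_none_some {i : Fin N} {v : {v : V // v ≠ e}} :
    (distGraph (starPower G e N) k).Adj none (some (i, v)) ↔ G.dist e v = k := by
  simp [distGraph, starPower_dist_none_some]

theorem card_neighborSet_distGraph_starPower_none (hk : k ≠ 0) :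
    Nat.card ((distGraph (starPower G e N) k).neighborSet none) =
      N * Nat.card {v : V | G.dist e v = k} := by
  have hne {v : V} (hv : G.dist e v = k) : v ≠ e := by
    rintro rfl
    exact hk (by simpa using hv.symm)
  let F : (distGraph (starPower G e N) k).neighborSet none ≃ Fin N × {v : V | G.dist e v = k} :=
    { toFun := fun
        | ⟨none, hx⟩ => absurd rfl hx.1
        | ⟨some (i, v), hx⟩ => (i, ⟨v, distGraph_starPower_adj_none_some.mp hx⟩)
      invFun := fun p =>
        ⟨some (p.1, ⟨p.2, hne p.2.2⟩), distGraph_starPower_adj_none_some.mpr p.2.2⟩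
      left_inv := fun
        | ⟨none, hx⟩ => absurd rfl hx.1
        | ⟨some _, _⟩ => rfl
      right_inv := fun _ => rfl }
  rw [Nat.card_congr F, Nat.card_prod, Nat.card_eq_fintype_card (α := Fin N), Fintype.card_fin]

end StarPower

section AdjacencyMatrix

variable {W : Type*} [Fintype W]

theorem adjMat_apply_self (H : SimpleGraph W) (a : W) : adjMat H a a = 0 := by
  simp [adjMat]

theorem isSymm_adjMat (H : SimpleGraph W) : (adjMat H).IsSymm := by
  classical
  exact H.isSymm_adjMatrix

theorem adjMat_sq_apply [DecidableEq W] (H : SimpleGraph W) (a b : W) :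
    (adjMat H ^ 2) a b = Nat.card {x // H.Adj a x ∧ H.Adj x b} := by
  classical
  simp [sq, Matrix.mul_apply, adjMat, ← ite_and, Finset.sum_boole, Nat.card_eq_fintype_card,
    Fintype.card_subtype, and_comm]

theorem Matrix.IsSymm.pow_two_mul_apply_self {ι R : Type*} [Fintype ι] [DecidableEq ι]
    [CommSemiring R] {A : Matrix ι ι R} (hA : A.IsSymm) (n : ℕ) (i : ι) :
    (A ^ (2 * n)) i i = ∑ j, (A ^ n) i j ^ 2 := by
  rw [two_mul, pow_add, Matrix.mul_apply]
  simp_rw [(hA.pow n).apply, sq]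

end AdjacencyMatrix

section VacuumMoments

variable {V : Type*} [Fintype V] [DecidableEq V] {G : SimpleGraph V} {e : V} {N k : ℕ}

theorem adjMat_distGraph_starPower_sq_none (hk : k ≠ 0) :
    (adjMat (distGraph (starPower G e N) k) ^ 2) none none =
      N * Nat.card {v : V | G.dist e v = k} := by
  rw [adjMat_sq_apply, ← Nat.cast_mul, ← card_neighborSet_distGraph_starPower_none hk]
  exact congrArg _ (Nat.card_congr (Equiv.subtypeEquivRight fun _ => and_iff_left_of_imp .symm))

theorem adjMat_distGraph_starPower_pow_four_none_le (hk : k ≠ 0) :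
    (adjMat (distGraph (starPower G e N) k) ^ 4) none none ≤
      (N * Nat.card {v : V | G.dist e v = k}) ^ 2 + N * Nat.card {v : V // v ≠ e} ^ 3 := by
  rw [show 4 = 2 * 2 from rfl, (isSymm_adjMat _).pow_two_mul_apply_self, Fintype.sum_option,
    adjMat_distGraph_starPower_sq_none hk]
  gcongr
  calc ∑ p : Fin N × {v : V // v ≠ e},
        (adjMat (distGraph (starPower G e N) k) ^ 2) none (some p) ^ 2
      ≤ ∑ _p : Fin N × {v : V // v ≠ e}, (Nat.card {v : V // v ≠ e} : ℝ) ^ 2 := by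
        gcongr with p
        · rw [adjMat_sq_apply]
          positivity
        · rw [adjMat_sq_apply]
          exact_mod_cast card_common_neighbors_distGraph_starPower_le hk p.1 p.2
    _ = N * Nat.card {v : V // v ≠ e} ^ 3 := by
        simp [Nat.card_eq_fintype_card]
        ring

theorem normalized_adjMat_distGraph_starPower_sq_none (hk : k ≠ 0) (hN : N ≠ 0)
    (hσ : Nat.card {v : V | G.dist e v = k} ≠ 0) :
    (((Real.sqrt (N * Nat.card {v : V | G.dist e v = k}))⁻¹ •
      adjMat (distGraph (starPower G e N) k)) ^ 2) none none = 1 := by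
  rw [smul_pow, Matrix.smul_apply, adjMat_distGraph_starPower_sq_none hk, smul_eq_mul, inv_pow,
    Real.sq_sqrt (by positivity)]
  exact inv_mul_cancel₀ (by positivity)

theorem normalized_adjMat_distGraph_starPower_pow_four_none_le (hk : k ≠ 0) (hN : N ≠ 0)
    (hσ : Nat.card {v : V | G.dist e v = k} ≠ 0) :
    (((Real.sqrt (N * Nat.card {v : V | G.dist e v = k}))⁻¹ •
      adjMat (distGraph (starPower G e N) k)) ^ 4) none none ≤
      1 + Nat.card {v : V // v ≠ e} ^ 3 / N := by
  have hσ' : (1 : ℝ) ≤ Nat.card {v : V | G.dist e v = k} := by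
    exact_mod_cast Nat.one_le_iff_ne_zero.mpr hσ
  set σ : ℝ := Nat.cast (Nat.card {v : V | G.dist e v = k})
  set D : ℝ := Nat.cast (Nat.card {v : V // v ≠ e})
  rw [smul_pow, Matrix.smul_apply, smul_eq_mul, inv_pow,
    show (4 : ℕ) = 2 * 2 from rfl, pow_mul, Real.sq_sqrt (by positivity)]
  calc ((N * σ) ^ 2)⁻¹ * (adjMat (distGraph (starPower G e N) k) ^ (2 * 2)) none none
      ≤ ((N * σ) ^ 2)⁻¹ * ((N * σ) ^ 2 + N * D ^ 3) := by
        gcongr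
        exact adjMat_distGraph_starPower_pow_four_none_le hk
    _ = 1 + D ^ 3 / (N * σ ^ 2) := by
        field_simp
    _ ≤ 1 + D ^ 3 / N := by
        gcongr
        exact le_mul_of_one_le_right (by positivity) (one_le_pow₀ hσ')

end VacuumMoments

section BernoulliLimit

theorem integral_bern (f : ℝ → ℝ) : ∫ x, f x ∂bern = (f (-1) + f 1) / 2 := by
  rw [bern, integral_add_measure ((integrable_dirac (by simp)).smul_measure (by simp))
      ((integrable_dirac (by simp)).smul_measure (by simp)),
    integral_smul_measure, integral_smul_measure, integral_dirac, integral_dirac]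
  simp
  ring

theorem two_add_abs_le_div_mul_sq_sq_sub_one {δ x : ℝ} (hδ : 0 < δ) (hδ₁ : δ ≤ 1)
    (hx₁ : δ ≤ |x - 1|) (hx₂ : δ ≤ |x + 1|) : 2 + |x| ≤ 5 / δ ^ 4 * (x ^ 2 - 1) ^ 2 := by
  have ht : δ ^ 2 ≤ |x ^ 2 - 1| := by
    rw [show x ^ 2 - 1 = (x - 1) * (x + 1) by ring, abs_mul, sq]
    exact mul_le_mul hx₁ hx₂ hδ.le (abs_nonneg _)
  have hδ2 : δ ^ 2 ≤ 1 := pow_le_one₀ hδ.le hδ₁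
  have hx : |x| ≤ 2 + |x ^ 2 - 1| := by
    nlinarith [sq_abs x, sq_nonneg (|x| - 1), le_abs_self (x ^ 2 - 1)]
  rw [← sq_abs (x ^ 2 - 1), div_mul_eq_mul_div, le_div_iff₀ (by positivity)]
  nlinarith [mul_le_mul_of_nonneg_left hδ2 (abs_nonneg (x ^ 2 - 1)),
    mul_le_mul ht ht (by positivity) (by positivity)]

theorem Continuous.exists_abs_le_add_mul_sq_sq_sub_one {g : ℝ → ℝ} (hg : Continuous g)
    (hg₁ : g 1 = 0) (hg₂ : g (-1) = 0) {K : ℝ} (hK : ∀ x, |g x| ≤ K * (2 + |x|))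
    {ε : ℝ} (hε : 0 < ε) : ∃ C, ∀ x, |g x| ≤ ε + C * (x ^ 2 - 1) ^ 2 := by
  obtain ⟨δ₁, hδ₁, h₁⟩ := Metric.continuousAt_iff.mp (hg.continuousAt (x := 1)) ε hε
  obtain ⟨δ₂, hδ₂, h₂⟩ := Metric.continuousAt_iff.mp (hg.continuousAt (x := -1)) ε hε
  set δ := min 1 (min δ₁ δ₂)
  have hδ : 0 < δ := lt_min one_pos (lt_min hδ₁ hδ₂)
  have hK0 : 0 ≤ K := by simpa using (abs_nonneg _).trans (hK 0)
  refine ⟨K * (5 / δ ^ 4), fun x => ?_⟩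
  have hq : 0 ≤ K * (5 / δ ^ 4) * (x ^ 2 - 1) ^ 2 := by positivity
  by_cases hx₁ : |x - 1| < δ
  · have := h₁ (hx₁.trans_le ((min_le_right _ _).trans (min_le_left _ _)))
    rw [Real.dist_eq, hg₁, sub_zero] at this
    linarith
  by_cases hx₂ : |x + 1| < δ
  · have := h₂ (x := x) (by
      rw [Real.dist_eq, sub_neg_eq_add]
      exact hx₂.trans_le ((min_le_right _ _).trans (min_le_right _ _)))
    rw [Real.dist_eq, hg₂, sub_zero] at this
    linarith
  rw [not_lt] at hx₁ hx₂
  calc |g x| ≤ K * (2 + |x|) := hK x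
    _ ≤ K * (5 / δ ^ 4 * (x ^ 2 - 1) ^ 2) := by
        gcongr
        exact two_add_abs_le_div_mul_sq_sq_sub_one hδ (min_le_left _ _) hx₁ hx₂
    _ ≤ ε + K * (5 / δ ^ 4) * (x ^ 2 - 1) ^ 2 := by linarith

theorem BoundedContinuousFunction.exists_abs_sub_affine_le (f : BoundedContinuousFunction ℝ ℝ)
    {ε : ℝ} (hε : 0 < ε) : ∃ C, ∀ x,
      |f x - ((f (-1) + f 1) / 2 + (f 1 - f (-1)) / 2 * x)| ≤ ε + C * (x ^ 2 - 1) ^ 2 := by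
  refine Continuous.exists_abs_le_add_mul_sq_sq_sub_one (by fun_prop) (by ring) (by ring)
    (K := ‖f‖) (fun x => ?_) hε
  have hb y := abs_le.mp (f.norm_coe_le_norm y)
  have hfx := hb x
  have hf₁ := hb 1
  have hf₂ := hb (-1)
  rw [abs_le]
  constructor <;> cases abs_cases x <;> nlinarith

theorem abs_integral_sub_le_of_abs_sub_affine_le {μ : Measure ℝ} [IsProbabilityMeasure μ]
    {f q : ℝ → ℝ} {a b ε C : ℝ} (hf : Integrable f μ) (hx : Integrable (fun x => x) μ)
    (hmean : ∫ x, x ∂μ = 0) (hq : Integrable q μ)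
    (hfq : ∀ x, |f x - (a + b * x)| ≤ ε + C * q x) :
    |∫ x, f x ∂μ - a| ≤ ε + C * ∫ x, q x ∂μ := by
  have hxb : Integrable (fun x => b * x) μ := hx.const_mul b
  have haffi : Integrable (fun x => a + b * x) μ := (integrable_const a).add hxb
  have haff : ∫ x, (a + b * x) ∂μ = a := by
    rw [integral_add (integrable_const a) hxb, integral_const_mul, hmean]
    simp
  calc |∫ x, f x ∂μ - a| = |∫ x, (f x - (a + b * x)) ∂μ| := by
        rw [integral_sub hf haffi, haff]
    _ ≤ ∫ x, |f x - (a + b * x)| ∂μ := abs_integral_le_integral_abs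
    _ ≤ ∫ x, (ε + C * q x) ∂μ :=
        integral_mono (hf.sub haffi).abs
          ((integrable_const ε).add (hq.const_mul C)) hfq
    _ = ε + C * ∫ x, q x ∂μ := by
        rw [integral_add (integrable_const ε) (hq.const_mul C), integral_const_mul]
        simp

theorem tendsto_integral_bern {ι : Type*} {l : Filter ι} {μ : ι → Measure ℝ}
    [∀ i, IsProbabilityMeasure (μ i)] (hx : ∀ i, Integrable (fun x => x) (μ i))
    (hmean : ∀ i, ∫ x, x ∂μ i = 0) (hq : ∀ i, Integrable (fun x => (x ^ 2 - 1) ^ 2) (μ i))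
    (hlim : Tendsto (fun i => ∫ x, (x ^ 2 - 1) ^ 2 ∂μ i) l (𝓝 0))
    (f : BoundedContinuousFunction ℝ ℝ) :
    Tendsto (fun i => ∫ x, f x ∂μ i) l (𝓝 (∫ x, f x ∂bern)) := by
  rw [integral_bern, Metric.tendsto_nhds]
  intro ε hε
  obtain ⟨C, hC⟩ := f.exists_abs_sub_affine_le (half_pos hε)
  have hCq : Tendsto (fun i => C * ∫ x, (x ^ 2 - 1) ^ 2 ∂μ i) l (𝓝 0) := by
    simpa using hlim.const_mul C
  filter_upwards [hCq.eventually (gt_mem_nhds (half_pos hε))] with i hi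
  have := abs_integral_sub_le_of_abs_sub_affine_le (f.integrable _) (hx i) (hmean i) (hq i) hC
  rw [Real.dist_eq]
  linarith

theorem integrable_sq_sub_one_sq {μ : Measure ℝ} [IsFiniteMeasure μ]
    (h₂ : Integrable (fun x => x ^ 2) μ) (h₄ : Integrable (fun x => x ^ 4) μ) :
    Integrable (fun x => (x ^ 2 - 1) ^ 2) μ := by
  have hexp : (fun x : ℝ => (x ^ 2 - 1) ^ 2) = fun x => x ^ 4 - 2 * x ^ 2 + 1 := by
    ext x; ring
  rw [hexp]
  exact (h₄.sub (h₂.const_mul 2)).add (integrable_const 1)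

theorem integral_sq_sub_one_sq {μ : Measure ℝ} [IsProbabilityMeasure μ]
    (h₂ : Integrable (fun x => x ^ 2) μ) (h₄ : Integrable (fun x => x ^ 4) μ)
    (hm₂ : ∫ x, x ^ 2 ∂μ = 1) :
    ∫ x, (x ^ 2 - 1) ^ 2 ∂μ = ∫ x, x ^ 4 ∂μ - 1 := by
  have hexp : (fun x : ℝ => (x ^ 2 - 1) ^ 2) = fun x => x ^ 4 - 2 * x ^ 2 + 1 := by
    ext x; ring
  have h₄₂ : Integrable (fun x => x ^ 4 - 2 * x ^ 2) μ := h₄.sub (h₂.const_mul 2)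
  rw [hexp, integral_add h₄₂ (integrable_const 1),
    integral_sub h₄ (h₂.const_mul 2), integral_const_mul, hm₂]
  simp
  ring

end BernoulliLimit

theorem star_power_distance_k_graph_bernoulli_limit_general
    {V : Type*} [Fintype V] [DecidableEq V] (G : SimpleGraph V) (e : V)
    (k : ℕ) (hk : 1 ≤ k)
    (σ : ℕ) (hσ : σ = Nat.card {v : V | G.dist e v = k}) (hσpos : 1 ≤ σ)
    (μ : ℕ → Measure ℝ)
    (hprob : ∀ N, 1 ≤ N → IsProbabilityMeasure (μ N))
    (hint : ∀ N, 1 ≤ N → ∀ m : ℕ, Integrable (fun x : ℝ => x ^ m) (μ N))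
    (hmom : ∀ N, 1 ≤ N → ∀ m : ℕ,
      ∫ x, x ^ m ∂(μ N) =
        (((Real.sqrt (N * σ))⁻¹ • adjMat (distGraph (starPower G e N) k)) ^ m) none none) :
    ∀ f : BoundedContinuousFunction ℝ ℝ,
      Tendsto (fun N => ∫ x, f x ∂(μ N)) atTop (𝓝 (∫ x, f x ∂bern)) := by
  subst hσ
  intro f
  have hk₀ : k ≠ 0 := Nat.one_le_iff_ne_zero.mp hk
  have hσ₀ := Nat.one_le_iff_ne_zero.mp hσpos
  have (N : ℕ) : IsProbabilityMeasure (μ (N + 1)) := hprob (N + 1) N.succ_pos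
  have hint' (N : ℕ) := hint (N + 1) N.succ_pos
  have hmom' (N : ℕ) := hmom (N + 1) N.succ_pos
  have hm₂ (N : ℕ) : ∫ x, x ^ 2 ∂μ (N + 1) = 1 := by
    rw [hmom', normalized_adjMat_distGraph_starPower_sq_none hk₀ N.succ_ne_zero hσ₀]
  have hlim : Tendsto (fun N => ∫ x, (x ^ 2 - 1) ^ 2 ∂μ (N + 1)) atTop (𝓝 0) := by
    refine squeeze_zero (fun N => integral_nonneg fun x => sq_nonneg _) (fun N => ?_)
      ((tendsto_const_div_atTop_nhds_zero_nat ((Nat.card {v : V // v ≠ e} : ℝ) ^ 3)).comp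
        (tendsto_add_atTop_nat 1))
    rw [integral_sq_sub_one_sq (hint' N 2) (hint' N 4) (hm₂ N), hmom']
    have := normalized_adjMat_distGraph_starPower_pow_four_none_le (G := G) (e := e) hk₀
      N.succ_ne_zero hσ₀
    simp only [Function.comp_apply, Nat.cast_succ] at this ⊢
    linarith
  refine (tendsto_add_atTop_iff_nat 1).mp (tendsto_integral_bern (fun N => ?_) (fun N => ?_)
    (fun N => integrable_sq_sub_one_sq (hint' N 2) (hint' N 4)) hlim f)
  · simpa using hint' N 1
  · simpa [adjMat_apply_self] using hmom' N 1

/-- Asymptotic vacuum spectral distribution of the distance `k`-graph of the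
`N`-fold star power: it converges weakly to the centered Bernoulli law `(1/2)δ₋₁ + (1/2)δ₁`. -/
theorem star_power_distance_k_graph_bernoulli_limit
    {V : Type*} [Fintype V] [DecidableEq V] (G : SimpleGraph V) (e : V)
    (hconn : G.Connected) (k : ℕ) (hk : 1 ≤ k)
    (σ : ℕ) (hσ : σ = Nat.card {v : V | G.dist e v = k}) (hσpos : 1 ≤ σ)
    (μ : ℕ → Measure ℝ)
    (hprob : ∀ N, 1 ≤ N → IsProbabilityMeasure (μ N))
    (hint : ∀ N, 1 ≤ N → ∀ m : ℕ, Integrable (fun x : ℝ => x ^ m) (μ N))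
    (hmom : ∀ N, 1 ≤ N → ∀ m : ℕ,
      ∫ x, x ^ m ∂(μ N) =
        (((Real.sqrt (N * σ))⁻¹ • adjMat (distGraph (starPower G e N) k)) ^ m) none none) :
    ∀ f : BoundedContinuousFunction ℝ ℝ,
      Tendsto (fun N => ∫ x, f x ∂(μ N)) atTop (𝓝 (∫ x, f x ∂bern)) :=
  star_power_distance_k_graph_bernoulli_limit_general G e k hk σ hσ hσpos μ hprob hint hmom
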